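/- arXiv:1510.01833 — 5 statements merged into one kernel-verified Lean document; each statement's English description precedes it below -/
import Mathlib

section
/- If two graphs H1 and H2 satisfy hom(G, H1) = hom(G, H2) for every connected graph G, then H1 and H2 are isomorphic. -/
structure LGraph where
  V : Type
  [fin : Fintype V]
  [dec : DecidableEq V]
  Adj : V → V → Prop
  symm : ∀ u v, Adj u v → Adj v u

attribute [instance] LGraph.fin LGraph.dec

/-- `f` is a graph homomorphism from `G` to `H`. -/
def LGraph.IsHom (G H : LGraph) (f : G.V → H.V) : Prop :=
  ∀ u v, G.Adj u v → H.Adj (f u) (f v)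

/-- The number of homomorphisms from `G` to `H`. -/
noncomputable def homCount (G H : LGraph) : ℕ :=
  Nat.card {f : G.V → H.V // G.IsHom H f}

/-- Tensor (categorical) product of graphs. -/
def tensor (A B : LGraph) : LGraph where
  V := A.V × B.V
  Adj p q := A.Adj p.1 q.1 ∧ B.Adj p.2 q.2
  symm _ _ h := ⟨A.symm _ _ h.1, B.symm _ _ h.2⟩

/-- Exponential graph `A ^ B`: vertices are functions `V(B) → V(A)`. -/
def expG (A B : LGraph) : LGraph where
  V := B.V → A.V
  Adj f g := ∀ u v, B.Adj u v → A.Adj (f u) (g v)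
  symm f g h u v e := A.symm _ _ (h v u (B.symm _ _ e))

/-- Disjoint union of graphs. -/
def disjUnion (A B : LGraph) : LGraph where
  V := A.V ⊕ B.V
  Adj u v := match u, v with
    | .inl a, .inl a' => A.Adj a a'
    | .inr b, .inr b' => B.Adj b b'
    | _, _ => False
  symm u v h := by
    cases u <;> cases v <;>
      first
        | exact A.symm _ _ h
        | exact B.symm _ _ h
        | exact h.elim

/-- Disjoint union of `k` copies of `H`. -/
def kCopies (k : ℕ) (H : LGraph) : LGraph where
  V := Fin k × H.V
  Adj p q := p.1 = q.1 ∧ H.Adj p.2 q.2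
  symm _ _ h := ⟨h.1.symm, H.symm _ _ h.2⟩

/-- Complete (loop-free) graph on `n` vertices. -/
def completeG (n : ℕ) : LGraph where
  V := Fin n
  Adj u v := u ≠ v
  symm _ _ h := h.symm

/-- Complete bipartite graph `K_{d,d}`. -/
def compBip (d : ℕ) : LGraph where
  V := Fin d ⊕ Fin d
  Adj u v := u.isLeft ≠ v.isLeft
  symm _ _ h := h.symm

/-- Two looped vertices with no other edges. -/
def l2 : LGraph where
  V := Fin 2
  Adj u v := u = v
  symm _ _ h := h.symm

/-- `G°`: add a loop at every vertex of `G`. -/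
def loopify (G : LGraph) : LGraph where
  V := G.V
  Adj u v := u = v ∨ G.Adj u v
  symm u v h := h.elim (fun e => Or.inl e.symm) (fun e => Or.inr (G.symm _ _ e))

/-- `l(H)`: induced subgraph of `H` on its looped vertices. -/
noncomputable def loopedPart (H : LGraph) : LGraph where
  V := {v : H.V // H.Adj v v}
  fin := Fintype.ofFinite _
  Adj u v := H.Adj u.1 v.1
  symm u v h := H.symm _ _ h

/-- A graph is bipartite if its vertices split into two parts with all edges between them. -/
def IsBipartite (G : LGraph) : Prop :=
  ∃ s : Set G.V, ∀ u v, G.Adj u v → (u ∈ s ↔ v ∉ s)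

/-- Graph isomorphism. -/
def Iso (A B : LGraph) : Prop :=
  ∃ e : A.V ≃ B.V, ∀ u v, A.Adj u v ↔ B.Adj (e u) (e v)

/-- `G` is `d`-regular (a loop contributes once to the degree). -/
def GRegular (G : LGraph) (d : ℕ) : Prop :=
  ∀ v : G.V, Nat.card {u : G.V // G.Adj v u} = d

/-- `G` is connected. -/
def GConnected (G : LGraph) : Prop :=
  Nonempty G.V ∧ ∀ u v : G.V, Relation.ReflTransGen G.Adj u v

/-- `H` has no clique of size `n`. -/
def CliqueFree (H : LGraph) (n : ℕ) : Prop :=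
  ¬ ∃ f : Fin n → H.V, Function.Injective f ∧ ∀ i j, i ≠ j → H.Adj (f i) (f j)

/-- `H` has no loops. -/
def LoopFree (H : LGraph) : Prop := ∀ v, ¬ H.Adj v v

/-- `H` is bipartite reducible: `hom(G,H)² ≤ hom(G × K₂, H)` for all `G`. -/
def BipRed (H : LGraph) : Prop :=
  ∀ G : LGraph, homCount G H ^ 2 ≤ homCount (tensor G (completeG 2)) H

/-! Homomorphism counts are multiplicative over connected components, so the counts from
connected graphs determine the counts from all graphs. Sorting the homomorphisms `G → H` by their
kernels gives `hom(G, H) = ∑_P inj(G/P, H)` over the partitions `P` of `V(G)`, where only the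
trivial partition gives a graph on `|V(G)|` vertices; by induction on `|V(G)|` the counts of
injective homomorphisms agree as well. Then `inj(H₁, H₂) = inj(H₁, H₁) > 0` and
`inj(H₂, H₁) = inj(H₂, H₂) > 0`, and injective homomorphisms in both directions force equally many
vertices and arcs on both sides, so either one is an isomorphism. -/

open Function

instance (G : LGraph) : Std.Symm G.Adj := ⟨G.symm⟩

lemma homCount_of_isEmpty (G H : LGraph) [IsEmpty G.V] : homCount G H = 1 :=
  Nat.card_eq_one_iff_unique.2 ⟨inferInstance, ⟨⟨isEmptyElim, fun u => isEmptyElim u⟩⟩⟩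

section Components

noncomputable def LGraph.induce (G : LGraph) (s : Set G.V) : LGraph where
  V := s
  fin := Fintype.ofFinite _
  dec := Classical.decEq _
  Adj u v := G.Adj u v
  symm _ _ h := G.symm _ _ h

variable {G : LGraph} {s : Set G.V}

lemma isHom_iff_isHom_induce_and_compl {H : LGraph} (hs : ∀ u v, G.Adj u v → (u ∈ s ↔ v ∈ s))
    (f : G.V → H.V) :
    G.IsHom H f ↔
      (G.induce s).IsHom H (fun v => f v.1) ∧ (G.induce sᶜ).IsHom H (fun v => f v.1) := by
  refine ⟨fun hf => ⟨fun u v h => hf u.1 v.1 h, fun u v h => hf u.1 v.1 h⟩,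
    fun ⟨hin, hout⟩ u v h => ?_⟩
  by_cases hu : u ∈ s
  · exact hin ⟨u, hu⟩ ⟨v, (hs u v h).1 hu⟩ h
  · exact hout ⟨u, hu⟩ ⟨v, mt (hs u v h).2 hu⟩ h

lemma homCount_eq_mul_induce_compl (H : LGraph) (hs : ∀ u v, G.Adj u v → (u ∈ s ↔ v ∈ s)) :
    homCount G H = homCount (G.induce s) H * homCount (G.induce sᶜ) H := by
  classical
  rw [homCount, homCount, homCount, ← Nat.card_prod]
  exact Nat.card_congr <|
    ((Equiv.piEquivPiSubtypeProd (· ∈ s) _).subtypeEquiv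
      (isHom_iff_isHom_induce_and_compl hs)).trans Equiv.subtypeProdEquivProd

lemma gConnected_of_forall_reflTransGen (v : G.V) (h : ∀ u, Relation.ReflTransGen G.Adj v u) :
    GConnected G :=
  ⟨⟨v⟩, fun a b => (symm (h a)).trans (h b)⟩

lemma homCount_eq_of_connected {H1 H2 : LGraph}
    (h : ∀ G : LGraph, GConnected G → homCount G H1 = homCount G H2) (G : LGraph) :
    homCount G H1 = homCount G H2 := by
  induction hn : Nat.card G.V using Nat.strong_induction_on generalizing G with
  | _ n ih =>
  cases isEmpty_or_nonempty G.V with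
  | inl _ => rw [homCount_of_isEmpty, homCount_of_isEmpty]
  | inr hne =>
  obtain ⟨v⟩ := hne
  let s : Set G.V := {u | Relation.ReflTransGen G.Adj v u}
  by_cases hs : ∀ u, u ∈ s
  · exact h G (gConnected_of_forall_reflTransGen v hs)
  obtain ⟨w, hw⟩ := not_forall.1 hs
  have hcl : ∀ a b, G.Adj a b → (a ∈ s ↔ b ∈ s) :=
    fun a b hab => ⟨fun ha => ha.tail hab, fun hb => hb.tail (G.symm _ _ hab)⟩
  have hs_lt : Nat.card (G.induce s).V < n := hn ▸ Finite.card_subtype_lt hw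
  have hsc_lt : Nat.card (G.induce sᶜ).V < n :=
    hn ▸ Finite.card_subtype_lt (p := (· ∈ sᶜ)) (not_not.2 Relation.ReflTransGen.refl)
  rw [homCount_eq_mul_induce_compl H1 hcl, homCount_eq_mul_induce_compl H2 hcl,
    ih _ hs_lt _ rfl, ih _ hsc_lt _ rfl]

end Components

noncomputable def injCount (G H : LGraph) : ℕ :=
  Nat.card {f : G.V → H.V // G.IsHom H f ∧ Injective f}

lemma injCount_pos_iff {G H : LGraph} :
    0 < injCount G H ↔ ∃ f : G.V → H.V, G.IsHom H f ∧ Injective f := by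
  rw [injCount, Nat.card_pos_iff, nonempty_subtype]
  exact and_iff_left inferInstance

lemma injCount_self_pos (G : LGraph) : 0 < injCount G G :=
  injCount_pos_iff.2 ⟨id, fun _ _ h => h, injective_id⟩

section Quotients

noncomputable instance Setoid.instFintype (α : Type) [Finite α] : Fintype (Setoid α) :=
  have : Finite (Setoid α) :=
    Finite.of_injective (fun P : Setoid α => (⇑P : α → α → Prop))
      fun _ _ => Setoid.eq_iff_rel_eq.2
  Fintype.ofFinite _

lemma Setoid.ker_comp_mk_of_injective {α β : Type*} {P : Setoid α} {g : Quotient P → β}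
    (hg : Injective g) : Setoid.ker (g ∘ Quotient.mk P) = P :=
  Setoid.ext fun _ _ => by rw [Setoid.ker_def, comp_apply, comp_apply, hg.eq_iff, Quotient.eq]

noncomputable def LGraph.quotient (G : LGraph) (P : Setoid G.V) : LGraph where
  V := Quotient P
  fin := Fintype.ofFinite _
  dec := Classical.decEq _
  Adj x y := ∃ u v, Quotient.mk P u = x ∧ Quotient.mk P v = y ∧ G.Adj u v
  symm _ _ := fun ⟨u, v, hu, hv, h⟩ => ⟨v, u, hv, hu, G.symm _ _ h⟩

variable {G H : LGraph}

lemma isHom_quotient_iff {P : Setoid G.V} {g : Quotient P → H.V} :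
    (G.quotient P).IsHom H g ↔ G.IsHom H (g ∘ Quotient.mk P) :=
  ⟨fun hg u v h => hg _ _ ⟨u, v, rfl, rfl, h⟩,
    fun hg _ _ ⟨u, v, hu, hv, h⟩ => hu ▸ hv ▸ hg u v h⟩

variable (G H) in
noncomputable def homEquivSigmaInjQuotient :
    {f : G.V → H.V // G.IsHom H f} ≃
      Σ P : Setoid G.V, {g : Quotient P → H.V // (G.quotient P).IsHom H g ∧ Injective g} :=
  let factor :
      (Σ P : Setoid G.V, {g : Quotient P → H.V // (G.quotient P).IsHom H g ∧ Injective g}) →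
        {f : G.V → H.V // G.IsHom H f} :=
    fun x => ⟨x.2.1 ∘ Quotient.mk x.1, isHom_quotient_iff.1 x.2.2.1⟩
  have factor_injective : Injective factor := by
    rintro ⟨P, g, _, hg_inj⟩ ⟨Q, g', _, hg'_inj⟩ h
    have h : g ∘ Quotient.mk P = g' ∘ Quotient.mk Q := congrArg Subtype.val h
    obtain rfl : P = Q := by
      rw [← Setoid.ker_comp_mk_of_injective hg_inj, h, Setoid.ker_comp_mk_of_injective hg'_inj]
    obtain rfl : g = g' := funext fun x => Quotient.inductionOn x (congrFun h)
    rfl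
  have factor_surjective : Surjective factor := fun f =>
    ⟨⟨Setoid.ker f.1, Setoid.kerLift f.1, isHom_quotient_iff.2 f.2, Setoid.kerLift_injective f.1⟩,
      rfl⟩
  (Equiv.ofBijective factor ⟨factor_injective, factor_surjective⟩).symm

variable (G H) in
lemma homCount_eq_sum_injCount_quotient :
    homCount G H = ∑ P : Setoid G.V, injCount (G.quotient P) H := by
  rw [homCount, Nat.card_congr (homEquivSigmaInjQuotient G H), Nat.card_sigma]
  rfl

variable (G H) in
lemma injCount_quotient_bot : injCount (G.quotient ⊥) H = injCount G H :=
  Nat.card_congr <| (Setoid.quotientBotEquiv.arrowCongr (Equiv.refl _)).subtypeEquiv fun g =>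
    and_congr isHom_quotient_iff (Setoid.quotientBotEquiv.symm.injective_comp g).symm

lemma card_quotient_lt {P : Setoid G.V} (hP : P ≠ ⊥) :
    Nat.card (G.quotient P).V < Nat.card G.V := by
  obtain ⟨a, b, hab, hne⟩ : ∃ a b, P a b ∧ a ≠ b := by
    by_contra! h
    exact hP (Setoid.ext fun a b => ⟨h a b, fun hab => hab ▸ P.refl a⟩)
  have mk_surjective : Surjective (Quotient.mk P) := Quotient.mk_surjective
  refine (Nat.card_le_card_of_surjective _ mk_surjective).lt_of_ne fun hcard => hne ?_
  exact (mk_surjective.bijective_of_nat_card_le hcard.ge).1 (Quotient.sound hab)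

end Quotients

lemma injCount_eq_of_homCount_eq {H1 H2 : LGraph} (h : ∀ G : LGraph, homCount G H1 = homCount G H2)
    (G : LGraph) : injCount G H1 = injCount G H2 := by
  induction hn : Nat.card G.V using Nat.strong_induction_on generalizing G with
  | _ n ih =>
  classical
  have hsum := h G
  rw [homCount_eq_sum_injCount_quotient, homCount_eq_sum_injCount_quotient,
    ← Finset.add_sum_erase _ _ (Finset.mem_univ ⊥), ← Finset.add_sum_erase _ _ (Finset.mem_univ ⊥),
    injCount_quotient_bot, injCount_quotient_bot,
    Finset.sum_congr rfl fun P hP => ih _ (hn ▸ card_quotient_lt (Finset.ne_of_mem_erase hP)) _ rfl]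
    at hsum
  exact Nat.add_right_cancel hsum

def LGraph.IsHom.arcMap {C D : LGraph} {φ : C.V → D.V} (hφ : C.IsHom D φ) :
    {p : C.V × C.V // C.Adj p.1 p.2} → {q : D.V × D.V // D.Adj q.1 q.2} :=
  fun p => ⟨Prod.map φ φ p.1, hφ _ _ p.2⟩

lemma LGraph.IsHom.arcMap_injective {C D : LGraph} {φ : C.V → D.V} (hφ : C.IsHom D φ)
    (hφ_inj : Injective φ) : Injective hφ.arcMap :=
  fun _ _ h => Subtype.ext (hφ_inj.prodMap hφ_inj (congrArg Subtype.val h))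

lemma iso_of_injective_homs {A B : LGraph} {f : A.V → B.V} {g : B.V → A.V}
    (hf : A.IsHom B f) (hf_inj : Injective f) (hg : B.IsHom A g) (hg_inj : Injective g) :
    Iso A B := by
  have f_bijective := hf_inj.bijective_of_nat_card_le (Nat.card_le_card_of_injective g hg_inj)
  have arc_surjective := ((hf.arcMap_injective hf_inj).bijective_of_nat_card_le
    (Nat.card_le_card_of_injective _ (hg.arcMap_injective hg_inj))).2
  refine ⟨Equiv.ofBijective f f_bijective, fun u v => ⟨hf u v, fun huv => ?_⟩⟩
  obtain ⟨⟨⟨u', v'⟩, h⟩, hp⟩ := arc_surjective ⟨(f u, f v), huv⟩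
  obtain ⟨rfl, rfl⟩ : u' = u ∧ v' = v := by
    simpa only [LGraph.IsHom.arcMap, Prod.map, Prod.mk.injEq, hf_inj.eq_iff]
      using congrArg Subtype.val hp
  exact h

theorem lovasz_connected (H1 H2 : LGraph)
    (h : ∀ G : LGraph, GConnected G → homCount G H1 = homCount G H2) :
    Iso H1 H2 := by
  have inj_eq := injCount_eq_of_homCount_eq (homCount_eq_of_connected h)
  obtain ⟨f, hf, hf_inj⟩ := injCount_pos_iff.1 (inj_eq H1 ▸ injCount_self_pos H1)
  obtain ⟨g, hg, hg_inj⟩ := injCount_pos_iff.1 ((inj_eq H2).symm ▸ injCount_self_pos H2)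
  exact iso_of_injective_homs hf hf_inj hg hg_inj
end

section
/- Let A be a non-empty graph (i.e., having at least one edge) and B any graph, both possibly with loops. Then A^B is bipartite if and only if A is bipartite and B is not bipartite. -/
/-! Constant maps embed `A` into `A ^ B`, and a homomorphism `B → A` is a looped vertex of
`A ^ B`; when `B` is bipartite it maps onto an edge of `A`. This gives the forward direction.
Conversely, postcomposing with a 2-colouring of `A` maps `A ^ B` to `K₂ ^ B`, so it suffices that
`K₂ ^ B` is bipartite. If `f₀ ~ f₁ ~ ⋯ ~ fₙ = f₀` is an odd closed walk in `K₂ ^ B`, then for every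
edge `uv` of `B` the values `f₀ u, f₁ v, f₂ u, …, fₙ v = f₀ v` alternate in `K₂`, so `f₀ u ≠ f₀ v`
and `f₀` is a 2-colouring of `B`. -/

open Relation

instance inst_s8 (G : LGraph) : Std.Symm G.Adj := ⟨G.symm⟩

section

variable {G H K : LGraph}

theorem LGraph.IsHom.comp {f : G.V → H.V} {g : H.V → K.V} (hg : H.IsHom K g)
    (hf : G.IsHom H f) : G.IsHom K (g ∘ f) :=
  fun _ _ h => hg _ _ (hf _ _ h)

theorem isHom_completeG_two_of_adj {a b : G.V} (h : G.Adj a b) :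
    (completeG 2).IsHom G ![a, b] := by
  intro i j hij
  fin_cases i <;> fin_cases j
  · exact absurd rfl hij
  · exact h
  · exact G.symm _ _ h
  · exact absurd rfl hij

theorem isBipartite_iff_exists_isHom_completeG_two :
    IsBipartite G ↔ ∃ f : G.V → Fin 2, G.IsHom (completeG 2) f := by
  constructor
  · rintro ⟨s, hs⟩
    classical
    refine ⟨fun v => if v ∈ s then 0 else 1, fun u v huv => ?_⟩
    have := hs u v huv
    by_cases hu : u ∈ s <;> simp_all [completeG]
  · rintro ⟨f, hf⟩
    refine ⟨{v | f v = 0}, fun u v huv => ?_⟩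
    have : f u ≠ f v := hf u v huv
    simp only [Set.mem_ofPred_eq]
    omega

theorem IsBipartite.of_isHom {f : G.V → H.V} (hf : G.IsHom H f) (hH : IsBipartite H) :
    IsBipartite G := by
  obtain ⟨c, hc⟩ := isBipartite_iff_exists_isHom_completeG_two.mp hH
  exact isBipartite_iff_exists_isHom_completeG_two.mpr ⟨c ∘ f, hc.comp hf⟩

theorem not_isBipartite_of_adj_self {v : G.V} (hv : G.Adj v v) : ¬ IsBipartite G := by
  rintro ⟨s, hs⟩
  have := hs v v hv
  tauto

/-- Adjacency in the bipartite double cover `tensor G (completeG 2)`, typed on `G.V × Fin 2` so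
that the two sheets can be written as numerals. A walk from `(v, 0)` to `(v, 1)` is an odd closed
walk at `v`. -/
def LGraph.CoverAdj (G : LGraph) : G.V × Fin 2 → G.V × Fin 2 → Prop :=
  (tensor G (completeG 2)).Adj

instance (G : LGraph) : Std.Symm G.CoverAdj := ⟨(tensor G (completeG 2)).symm⟩

theorem LGraph.coverAdj_iff {u v : G.V} {i j : Fin 2} :
    G.CoverAdj (u, i) (v, j) ↔ G.Adj u v ∧ i ≠ j :=
  Iff.rfl

theorem exists_reflTransGen_coverAdj_of_reflTransGen {u v : G.V} (h : ReflTransGen G.Adj u v) :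
    ∃ i, ReflTransGen G.CoverAdj (u, 0) (v, i) := by
  induction h with
  | refl => exact ⟨0, .refl⟩
  | tail _ hvw ih =>
    obtain ⟨i, hi⟩ := ih
    exact ⟨i + 1, hi.tail (LGraph.coverAdj_iff.mpr ⟨hvw, by omega⟩)⟩

theorem exists_reflTransGen_coverAdj_of_not_isBipartite (hG : ¬ IsBipartite G) :
    ∃ v, ReflTransGen G.CoverAdj (v, 0) (v, 1) := by
  by_contra! hodd
  let conn : Setoid G.V := ⟨ReflTransGen G.Adj, ⟨fun _ => .refl, symm, .trans⟩⟩
  let r : G.V → G.V := fun v => (Quotient.mk conn v).out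
  refine hG ⟨{v | ReflTransGen G.CoverAdj (r v, 0) (v, 1)}, fun u v huv => ?_⟩
  have hr : r u = r v := congrArg Quotient.out (Quotient.sound (.single huv))
  simp only [Set.mem_ofPred_eq, hr]
  constructor
  · intro hu hv
    have hu0 : ReflTransGen G.CoverAdj (r v, 0) (u, 0) :=
      hv.tail (LGraph.coverAdj_iff.mpr ⟨G.symm _ _ huv, by decide⟩)
    exact hodd u ((symm hu0).trans hu)
  · intro hv
    obtain ⟨i, hi⟩ := exists_reflTransGen_coverAdj_of_reflTransGen (Quotient.mk_out (s := conn) v)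
    obtain rfl : i = 0 := by
      by_contra hi0
      exact hv (by rwa [show i = 1 by omega] at hi)
    exact hi.tail (LGraph.coverAdj_iff.mpr ⟨G.symm _ _ huv, by decide⟩)

end

section

variable {A A' B : LGraph}

theorem expG_adj_self_iff {f : B.V → A.V} : (expG A B).Adj f f ↔ B.IsHom A f :=
  Iff.rfl

theorem isHom_expG_const : A.IsHom (expG A B) fun a _ => a :=
  fun _ _ h _ _ _ => h

theorem isHom_expG_postcomp {φ : A.V → A'.V} (hφ : A.IsHom A' φ) :
    (expG A B).IsHom (expG A' B) (φ ∘ ·) :=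
  fun _ _ h u v huv => hφ _ _ (h u v huv)

theorem reflTransGen_coverAdj_expG_completeG_two {f₀ : B.V → Fin 2} {p : (B.V → Fin 2) × Fin 2}
    (h : ReflTransGen (expG (completeG 2) B).CoverAdj (f₀, 0) p) {u v : B.V} (huv : B.Adj u v) :
    (p.2 = 0 → p.1 u = f₀ u) ∧ (p.2 = 1 → p.1 v ≠ f₀ u) := by
  induction h with
  | refl => exact ⟨fun _ => rfl, fun h => absurd h Fin.zero_ne_one⟩
  | @tail p q _ hpq ih =>
    obtain ⟨hfg, hsheet⟩ := hpq
    have hu : p.1 u ≠ q.1 v := hfg u v huv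
    have hv : p.1 v ≠ q.1 u := hfg v u (B.symm _ _ huv)
    have hij : p.2 ≠ q.2 := hsheet
    constructor <;> intro hq
    · have := ih.2 (by omega)
      omega
    · have := ih.1 (by omega)
      omega

theorem isBipartite_expG_completeG_two_of_not_isBipartite (hB : ¬ IsBipartite B) :
    IsBipartite (expG (completeG 2) B) := by
  by_contra hE
  obtain ⟨f₀, hf₀⟩ := exists_reflTransGen_coverAdj_of_not_isBipartite hE
  refine hB (isBipartite_iff_exists_isHom_completeG_two.mpr ⟨f₀, fun u v huv => ?_⟩)
  exact ((reflTransGen_coverAdj_expG_completeG_two hf₀ huv).2 rfl).symm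

end

theorem exp_bipartite_iff (A B : LGraph) (hA : ∃ u v, A.Adj u v) :
    IsBipartite (expG A B) ↔ (IsBipartite A ∧ ¬ IsBipartite B) := by
  constructor
  · intro hE
    refine ⟨hE.of_isHom isHom_expG_const, fun hB => ?_⟩
    obtain ⟨a, b, hab⟩ := hA
    obtain ⟨c, hc⟩ := isBipartite_iff_exists_isHom_completeG_two.mp hB
    have hloop : (expG A B).Adj (![a, b] ∘ c) (![a, b] ∘ c) :=
      expG_adj_self_iff.mpr ((isHom_completeG_two_of_adj hab).comp hc)
    exact not_isBipartite_of_adj_self hloop hE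
  · rintro ⟨hAbip, hB⟩
    obtain ⟨c, hc⟩ := isBipartite_iff_exists_isHom_completeG_two.mp hAbip
    exact (isBipartite_expG_completeG_two_of_not_isBipartite hB).of_isHom (isHom_expG_postcomp hc)
end

section
/- If H is bipartite reducible and A is an arbitrary graph (possibly with loops), then the exponential graph H^A is bipartite reducible. -/
/-!
Homomorphisms `G → H^A` are, by currying, the homomorphisms `G × A → H`, and `(G × K₂) × A ≅ (G × A) × K₂`.
So the inequality for `H^A` at `G` is the inequality for `H` at `G × A`.
-/

theorem homCount_congr_of_iso {G₁ G₂ : LGraph} (h : Iso G₁ G₂) (H : LGraph) :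
    homCount G₁ H = homCount G₂ H := by
  obtain ⟨e, he⟩ := h
  refine Nat.card_congr ((e.arrowCongr (Equiv.refl H.V)).subtypeEquiv fun f => ?_)
  simp only [LGraph.IsHom, Equiv.arrowCongr_apply, Equiv.coe_refl, Function.comp_apply]
  refine ⟨fun hf u v huv => ?_, fun hf u v huv => ?_⟩
  · simpa using hf _ _ ((he (e.symm u) (e.symm v)).2 (by simpa using huv))
  · simpa using hf _ _ ((he u v).1 huv)

theorem homCount_expG (G H A : LGraph) :
    homCount G (expG H A) = homCount (tensor G A) H :=
  Nat.card_congr <| ((Equiv.curry G.V A.V H.V).subtypeEquiv fun _ =>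
    ⟨fun hf u v huv a b hab => hf (u, a) (v, b) ⟨huv, hab⟩,
      fun hf _ _ h => hf _ _ h.1 _ _ h.2⟩).symm

theorem iso_tensor_right_comm (G A B : LGraph) :
    Iso (tensor (tensor G A) B) (tensor (tensor G B) A) :=
  ⟨⟨fun p => ((p.1.1, p.2), p.1.2), fun p => ((p.1.1, p.2), p.1.2), fun _ => rfl, fun _ => rfl⟩,
    fun _ _ => ⟨fun ⟨⟨h₁, h₂⟩, h₃⟩ => ⟨⟨h₁, h₃⟩, h₂⟩, fun ⟨⟨h₁, h₃⟩, h₂⟩ => ⟨⟨h₁, h₂⟩, h₃⟩⟩⟩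

theorem bipRed_exp (H : LGraph) (hH : BipRed H) (A : LGraph) :
    BipRed (expG H A) := by
  intro G
  rw [homCount_expG, homCount_expG,
    homCount_congr_of_iso (iso_tensor_right_comm G (completeG 2) A)]
  exact hH (tensor G A)
end

section
/- Assume the Galvin–Tetali theorem: for every d-regular bipartite graph G on n vertices and every graph H, hom(G,H) ≤ hom(K_{d,d}, H)^{n/(2d)}. Then for every bipartite reducible graph H and every d-regular graph G on n vertices (not necessarily bipartite), hom(G,H) ≤ hom(K_{d,d}, H)^{n/(2d)}. -/
theorem GRegular.tensor {A B : LGraph} {a b : ℕ} (hA : GRegular A a) (hB : GRegular B b) :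
    GRegular (tensor A B) (a * b) := fun v => by
  rw [← hA v.1, ← hB v.2, ← Nat.card_prod]
  exact Nat.card_congr Equiv.subtypeProdEquivProd

theorem completeG_regular (n : ℕ) : GRegular (completeG n) (n - 1) := fun (i : Fin n) => by
  change Nat.card {j : Fin n // i ≠ j} = n - 1
  simp [Nat.card_eq_fintype_card]

theorem IsBipartite.tensor_right (A : LGraph) {B : LGraph} (hB : IsBipartite B) :
    IsBipartite (tensor A B) :=
  let ⟨s, hs⟩ := hB
  ⟨{p | p.2 ∈ s}, fun _ _ h => hs _ _ h.2⟩

theorem completeG_two_isBipartite : IsBipartite (completeG 2) :=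
  ⟨{u : Fin 2 | u = 0}, fun (u v : Fin 2) (h : u ≠ v) => by change u = 0 ↔ ¬ v = 0; omega⟩

theorem card_tensor (A B : LGraph) :
    Fintype.card (tensor A B).V = Fintype.card A.V * Fintype.card B.V :=
  Fintype.card_prod A.V B.V

theorem bipRed_implies_Kdd_bound
    (galvinTetali : ∀ (D m : ℕ) (G' H' : LGraph), GRegular G' D → IsBipartite G' →
      Fintype.card G'.V = m → homCount G' H' ^ (2 * D) ≤ homCount (compBip D) H' ^ m)
    (H : LGraph) (hH : BipRed H) (d n : ℕ) (G : LGraph)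
    (hreg : GRegular G d) (hn : Fintype.card G.V = n) :
    homCount G H ^ (2 * d) ≤ homCount (compBip d) H ^ n := by
  set G₂ := tensor G (completeG 2)
  have hreg₂ : GRegular G₂ d := by simpa using hreg.tensor (completeG_regular 2)
  have hcard₂ : Fintype.card G₂.V = n * 2 := by rw [card_tensor, hn]; rfl
  have hGT := galvinTetali d (n * 2) G₂ H hreg₂
    (IsBipartite.tensor_right G completeG_two_isBipartite) hcard₂
  have hcover : homCount G₂ H ^ d ≤ homCount (compBip d) H ^ n := by
    refine (Nat.pow_le_pow_iff_left two_ne_zero).mp ?_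
    simpa only [← pow_mul, mul_comm] using hGT
  calc homCount G H ^ (2 * d) = (homCount G H ^ 2) ^ d := pow_mul _ _ _
    _ ≤ homCount G₂ H ^ d := Nat.pow_le_pow_left (hH G) d
    _ ≤ homCount (compBip d) H ^ n := hcover
end

section
/- Fix d ≥ 1. Let H be a loop-free graph with no clique of size d+1, and let G be a connected d-regular loop-free graph on n < 2d vertices with hom(G,H) > 0. Then there exists a natural number k such that hom(G, kH) > hom(K_{d+1}, kH)^{n/(d+1)} and hom(G, kH) > hom(K_{d,d}, kH)^{n/(2d)}, where kH denotes the disjoint union of k copies of H. -/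
/-!
A homomorphism from a connected graph into `k` disjoint copies of `H` lands in a single copy, so
`hom(G, kH) = k · hom(G, H)` for connected `G`, in particular for `G` and `K_{d,d}`; and
`hom(K_{d+1}, kH) = 0`. The clique inequality is then immediate, and the bipartite one compares
`(k · hom(K_{d,d}, H))^n` with `(k · hom(G, H))^{2d}`, which wins once `k > hom(K_{d,d}, H)^n`
because `n < 2d`.
-/

lemma LoopFree.kCopies {H : LGraph} (h : LoopFree H) (k : ℕ) : LoopFree (kCopies k H) :=
  fun v hv => h v.2 hv.2

lemma CliqueFree.kCopies {H : LGraph} {m : ℕ} (h : CliqueFree H m) (k : ℕ) :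
    CliqueFree (kCopies k H) m := by
  rintro ⟨f, hinj, hadj⟩
  refine h ⟨fun i => (f i).2, fun i j hij => ?_, fun i j hne => (hadj i j hne).2⟩
  by_contra hne
  exact hne (hinj (Prod.ext (hadj i j hne).1 hij))

lemma homCount_completeG_eq_zero {H : LGraph} {m : ℕ} (hloop : LoopFree H)
    (hclique : CliqueFree H m) : homCount (completeG m) H = 0 := by
  refine Nat.card_eq_zero.2 (Or.inl ⟨fun ⟨f, hf⟩ => hclique ⟨f, fun i j hij => ?_, hf⟩⟩)
  by_contra hne
  exact hloop (f j) (hij ▸ hf i j hne)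

lemma gConnected_compBip {d : ℕ} (hd : 1 ≤ d) : GConnected (compBip d) := by
  let z : Fin d := ⟨0, hd⟩
  have adj : ∀ i j : Fin d, (compBip d).Adj (.inl i) (.inr j) := fun _ _ => by simp [compBip]
  have toBase : ∀ v, Relation.ReflTransGen (compBip d).Adj v (.inl z) := by
    rintro (i | j)
    · exact .head (adj i z) (.single ((compBip d).symm _ _ (adj z z)))
    · exact .single ((compBip d).symm _ _ (adj z j))
  have : Std.Symm (compBip d).Adj := ⟨(compBip d).symm⟩
  exact ⟨⟨.inl z⟩, fun u v => (toBase u).trans (Std.Symm.symm _ _ (toBase v))⟩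

lemma GConnected.fst_eq_of_isHom_kCopies {G H : LGraph} (hG : GConnected G) {k : ℕ}
    {f : G.V → (kCopies k H).V} (hf : G.IsHom (kCopies k H) f) (u v : G.V) :
    (f u).1 = (f v).1 := by
  induction hG.2 u v with
  | refl => rfl
  | tail _ hbc ih => exact ih.trans (hf _ _ hbc).1

noncomputable def GConnected.homKCopiesEquiv {G H : LGraph} (hG : GConnected G) (k : ℕ) :
    {f : G.V → (kCopies k H).V // G.IsHom (kCopies k H) f} ≃
      Fin k × {g : G.V → H.V // G.IsHom H g} where
  toFun f := ((f.1 hG.1.some).1, ⟨fun v => (f.1 v).2, fun u v h => (f.2 u v h).2⟩)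
  invFun p := ⟨fun v => (p.1, p.2.1 v), fun u v h => ⟨rfl, p.2.2 u v h⟩⟩
  left_inv f := by
    ext v : 2
    exact Prod.ext (hG.fst_eq_of_isHom_kCopies f.2 _ v) rfl
  right_inv _ := rfl

lemma homCount_kCopies {G H : LGraph} (hG : GConnected G) (k : ℕ) :
    homCount G (kCopies k H) = k * homCount G H := by
  rw [homCount, Nat.card_congr (hG.homKCopiesEquiv k), Nat.card_prod, Nat.card_fin, homCount]

lemma mul_pow_lt_mul_pow_of_lt {a n m : ℕ} (b : ℕ) (ha : 0 < a) (hnm : n < m) :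
    ((b ^ n + 1) * b) ^ n < ((b ^ n + 1) * a) ^ m := by
  set k := b ^ n + 1
  calc (k * b) ^ n = k ^ n * b ^ n := mul_pow k b n
    _ < k ^ n * k := by gcongr; omega
    _ = k ^ (n + 1) := (pow_succ k n).symm
    _ ≤ k ^ m := pow_le_pow_right₀ (by omega) hnm
    _ ≤ (k * a) ^ m := by gcongr; exact Nat.le_mul_of_pos_right k ha

theorem counterexample_family_general (d n : ℕ) (hd : 1 ≤ d) (H G : LGraph)
    (hHloop : LoopFree H) (hHclique : CliqueFree H (d + 1))
    (hGconn : GConnected G)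
    (hGn : Fintype.card G.V = n) (hn : n < 2 * d) (hpos : 0 < homCount G H) :
    ∃ k : ℕ,
      homCount G (kCopies k H) ^ (d + 1) >
        homCount (completeG (d + 1)) (kCopies k H) ^ n ∧
      homCount G (kCopies k H) ^ (2 * d) >
        homCount (compBip d) (kCopies k H) ^ n := by
  have hn0 : n ≠ 0 := hGn ▸ (have := hGconn.1; Fintype.card_ne_zero)
  set b := homCount (compBip d) H
  refine ⟨b ^ n + 1, ?_, ?_⟩
  · rw [homCount_completeG_eq_zero (hHloop.kCopies _) (hHclique.kCopies _), zero_pow hn0,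
      homCount_kCopies hGconn]
    positivity
  · rw [homCount_kCopies hGconn, homCount_kCopies (gConnected_compBip hd)]
    exact mul_pow_lt_mul_pow_of_lt b hpos hn

theorem counterexample_family (d n : ℕ) (hd : 1 ≤ d) (H G : LGraph)
    (hHloop : LoopFree H) (hHclique : CliqueFree H (d + 1))
    (hGconn : GConnected G) (hGloop : LoopFree G) (hGreg : GRegular G d)
    (hGn : Fintype.card G.V = n) (hn : n < 2 * d) (hpos : 0 < homCount G H) :
    ∃ k : ℕ,
      homCount G (kCopies k H) ^ (d + 1) >
        homCount (completeG (d + 1)) (kCopies k H) ^ n ∧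
      homCount G (kCopies k H) ^ (2 * d) >
        homCount (compBip d) (kCopies k H) ^ n :=
  counterexample_family_general d n hd H G hHloop hHclique hGconn hGn hn hpos
end
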